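/- Define h_n(α,β,c) = 2(c²-1)^n (n/2)! ((α+1)/2)_{n/2} ((β+1)/2)_{n/2} / [((α+β)/2+1)_n ((α+β+n)/2+1)_{n/2}] for n even, and h_n(α,β,c) = 2(c-1)^{n-1}(c+1)^{n+1} ((n-1)/2)! ((α+1)/2)_{(n+1)/2} ((β+1)/2)_{(n+1)/2} / [((α+β)/2+1)_n ((α+β+n+1)/2)_{(n+1)/2}] for n odd. With u_n(α,β,c) = (c-1)² n (α+β+n)/(α+β+2n)² for n even and u_n(α,β,c) = (c+1)²(α+n)(β+n)/(α+β+2n)² for n odd, one has h_n(α,β,c) = u_n(α,β,c) · h_{n-1}(α,β,c) for all n ≥ 1 (whenever all quantities are defined). -/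

import Mathlib

/-!
Both sides are explicit quotients of products, so it suffices to compare `h_n` with `h_{n-1}`
factor by factor, separately for each parity of `n`; write `s = (α+β)/2`.

For `n = 2k+1` each Pochhammer symbol of `h_{2k+1}` extends the matching one of `h_{2k}` by one
factor, `(a)_{m+1} = (a)_m (a+m)`, and the new factors form exactly `u_{2k+1}`.

For `n = 2k+2` the last denominator symbol changes its base instead:
`(s+k+1)_{k+1} (s+2k+2) = (s+k+1) (s+k+2)_{k+1}`. The factor `s+k+1 = (α+β+n)/2` of `u_n` cancels
against it; it is nonzero because it divides the denominator of `h_{n-1}`.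
-/

open Polynomial Finset

/-- Pochhammer (shifted factorial) symbol `(a)_k = a(a+1)⋯(a+k-1)`. -/
noncomputable def poch (a : ℂ) (k : ℕ) : ℂ := (ascPochhammer ℂ k).eval a

/-- Squared norms `h_n(α,β,c)` of the monic big `-1` Jacobi polynomials
(normalized by `⟨u,1⟩ = 1`). -/
noncomputable def hnorm (α β c : ℂ) (n : ℕ) : ℂ :=
  if Even n then
    2 * (c ^ 2 - 1) ^ n * ((n / 2).factorial : ℂ)
      * poch ((α + 1) / 2) (n / 2) * poch ((β + 1) / 2) (n / 2)
      / (poch ((α + β) / 2 + 1) n * poch ((α + β + n) / 2 + 1) (n / 2))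
  else
    2 * (c - 1) ^ (n - 1) * (c + 1) ^ (n + 1) * (((n - 1) / 2).factorial : ℂ)
      * poch ((α + 1) / 2) ((n + 1) / 2) * poch ((β + 1) / 2) ((n + 1) / 2)
      / (poch ((α + β) / 2 + 1) n * poch ((α + β + n + 1) / 2) ((n + 1) / 2))

/-- Subdiagonal recurrence coefficient `u_n(α,β,c)` of the monic big `-1` Jacobi polynomials. -/
noncomputable def ucoef (α β c : ℂ) (n : ℕ) : ℂ :=
  if Even n then (c - 1) ^ 2 * n * (α + β + n) / (α + β + 2 * n) ^ 2
  else (c + 1) ^ 2 * (α + n) * (β + n) / (α + β + 2 * n) ^ 2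

/-- Denominator of the norm formula `h_n(α,β,c)`. -/
noncomputable def hnormDenom (α β : ℂ) (n : ℕ) : ℂ :=
  if Even n then poch ((α + β) / 2 + 1) n * poch ((α + β + n) / 2 + 1) (n / 2)
  else poch ((α + β) / 2 + 1) n * poch ((α + β + n + 1) / 2) ((n + 1) / 2)

lemma poch_succ (a : ℂ) (k : ℕ) : poch a (k + 1) = poch a k * (a + k) :=
  ascPochhammer_succ_eval k a

lemma poch_succ_eq_mul_poch_add_one (a : ℂ) (k : ℕ) : poch a (k + 1) = a * poch (a + 1) k := by
  simp [poch, ascPochhammer_succ_left, eval_comp]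

lemma poch_mul_add_eq_mul_poch_add_one (a : ℂ) (k : ℕ) :
    poch a k * (a + k) = a * poch (a + 1) k := by
  rw [← poch_succ, poch_succ_eq_mul_poch_add_one]

section

variable (α β c : ℂ) (k : ℕ)

lemma hnorm_two_mul :
    hnorm α β c (2 * k) = 2 * (c - 1) ^ (2 * k) * (c + 1) ^ (2 * k) * (k.factorial : ℂ)
      * poch ((α + 1) / 2) k * poch ((β + 1) / 2) k
      / (poch ((α + β) / 2 + 1) (2 * k) * poch ((α + β) / 2 + k + 1) k) := by
  have hk : 2 * k / 2 = k := by omega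
  simp only [hnorm, even_two_mul, if_true, hk, show c ^ 2 - 1 = (c - 1) * (c + 1) by ring, mul_pow]
  push_cast
  ring_nf

lemma hnorm_two_mul_add_one :
    hnorm α β c (2 * k + 1) = 2 * (c - 1) ^ (2 * k) * (c + 1) ^ (2 * k + 2) * (k.factorial : ℂ)
      * poch ((α + 1) / 2) (k + 1) * poch ((β + 1) / 2) (k + 1)
      / (poch ((α + β) / 2 + 1) (2 * k + 1) * poch ((α + β) / 2 + k + 1) (k + 1)) := by
  have hk : (2 * k + 1 + 1) / 2 = k + 1 := by omega
  simp only [hnorm, Nat.not_even_two_mul_add_one, if_false, hk, Nat.add_sub_cancel,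
    Nat.mul_div_cancel_left k two_pos]
  push_cast
  ring_nf

lemma hnormDenom_two_mul_add_one :
    hnormDenom α β (2 * k + 1)
      = poch ((α + β) / 2 + 1) (2 * k + 1) * poch ((α + β) / 2 + k + 1) (k + 1) := by
  have hk : (2 * k + 1 + 1) / 2 = k + 1 := by omega
  simp only [hnormDenom, Nat.not_even_two_mul_add_one, if_false, hk]
  push_cast
  ring_nf

lemma ucoef_two_mul_add_one :
    ucoef α β c (2 * k + 1)
      = (c + 1) ^ 2 * ((α + 1) / 2 + k) * ((β + 1) / 2 + k) / ((α + β) / 2 + 2 * k + 1) ^ 2 := by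
  simp only [ucoef, Nat.not_even_two_mul_add_one, if_false]
  rw [← div_div_div_cancel_right₀ (by norm_num : (4 : ℂ) ≠ 0)]
  congr 1 <;> push_cast <;> ring

lemma ucoef_two_mul_add_two :
    ucoef α β c (2 * k + 2)
      = (c - 1) ^ 2 * (k + 1) * ((α + β) / 2 + k + 1) / ((α + β) / 2 + 2 * k + 2) ^ 2 := by
  simp only [ucoef, show Even (2 * k + 2) from ⟨k + 1, by ring⟩, if_true]
  rw [← div_div_div_cancel_right₀ (by norm_num : (4 : ℂ) ≠ 0)]
  congr 1 <;> push_cast <;> ring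

lemma hnorm_two_mul_add_one_eq :
    hnorm α β c (2 * k + 1) = ucoef α β c (2 * k + 1) * hnorm α β c (2 * k) := by
  rw [hnorm_two_mul_add_one, hnorm_two_mul, ucoef_two_mul_add_one, div_mul_div_comm]
  simp only [poch_succ]
  push_cast
  congr 1 <;> ring

lemma hnorm_two_mul_add_two_eq (ha : (α + β) / 2 + k + 1 ≠ 0) :
    hnorm α β c (2 * k + 2) = ucoef α β c (2 * k + 2) * hnorm α β c (2 * k + 1) := by
  set a := (α + β) / 2 + k + 1 with ha_def
  have hD : poch ((α + β) / 2 + 1) (2 * (k + 1)) * poch ((α + β) / 2 + (k + 1 : ℕ) + 1) (k + 1) * a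
      = (a + (k + 1)) ^ 2 * (poch ((α + β) / 2 + 1) (2 * k + 1) * poch a (k + 1)) := by
    have key := poch_mul_add_eq_mul_poch_add_one a (k + 1)
    rw [show 2 * (k + 1) = 2 * k + 1 + 1 by ring, poch_succ,
      show (α + β) / 2 + ((k + 1 : ℕ) : ℂ) + 1 = a + 1 by push_cast; ring]
    push_cast at key ⊢
    linear_combination -(poch ((α + β) / 2 + 1) (2 * k + 1) * (a + (k + 1))) * key
  rw [ucoef_two_mul_add_two, show 2 * k + 2 = 2 * (k + 1) by ring, hnorm_two_mul,
    hnorm_two_mul_add_one, ← ha_def, div_mul_div_comm, ← mul_div_mul_right _ _ ha, hD]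
  congr 1
  · push_cast [Nat.factorial_succ]
    ring
  · rw [ha_def]
    ring

lemma add_ne_zero_of_hnormDenom_two_mul_add_one_ne_zero (h : hnormDenom α β (2 * k + 1) ≠ 0) :
    (α + β) / 2 + k + 1 ≠ 0 := by
  rw [hnormDenom_two_mul_add_one, poch_succ_eq_mul_poch_add_one _ k] at h
  exact left_ne_zero_of_mul (right_ne_zero_of_mul h)

end

theorem hnorm_recurrence_general (α β c : ℂ) (n : ℕ) (hn : 1 ≤ n)
    (hd2 : hnormDenom α β (n - 1) ≠ 0) :
    hnorm α β c n = ucoef α β c n * hnorm α β c (n - 1) := by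
  obtain ⟨k, rfl | rfl⟩ : ∃ k, n = 2 * k + 1 ∨ n = 2 * k + 2 := ⟨(n - 1) / 2, by omega⟩
  · exact hnorm_two_mul_add_one_eq α β c k
  · exact hnorm_two_mul_add_two_eq α β c k
      (add_ne_zero_of_hnormDenom_two_mul_add_one_ne_zero α β k hd2)

/-- The explicit squared norms satisfy `h_n = u_n h_{n-1}` whenever all quantities are
defined. -/
theorem hnorm_recurrence (α β c : ℂ) (n : ℕ) (hn : 1 ≤ n)
    (hd1 : hnormDenom α β n ≠ 0) (hd2 : hnormDenom α β (n - 1) ≠ 0)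
    (hd3 : α + β + 2 * n ≠ 0) :
    hnorm α β c n = ucoef α β c n * hnorm α β c (n - 1) :=
  hnorm_recurrence_general α β c n hn hd2
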